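/- Define vN : ℕ → ℕ by vN 0 = 0 and vN (n+1) = vN n + 2^(vN n), let T : ℕ → ℕ be the superexponential tower (T 0 = 0, T (n+1) = 2^(T n)), and let V_Ack(x) be the least y such that x ≤ y and y = T z − 1 for some z ≥ 1. Then V_Ack(vN n) = T (n+1) − 1 for every n : ℕ. -/

import Mathlib

/-- `vN n` is the Ackermann code of the `n`-th von Neumann ordinal. -/
def vN : ℕ → ℕ
  | 0 => 0
  | n + 1 => vN n + 2 ^ vN n

/-- The superexponential tower: `T 0 = 0`, `T (n+1) = 2 ^ T n`. -/
def T : ℕ → ℕ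
  | 0 => 0
  | n + 1 => 2 ^ T n

/-- `VAck x` is the least `y` such that `x ≤ y` and `y = T z - 1` for some `z ≥ 1`. -/
noncomputable def VAck (x : ℕ) : ℕ := sInf {y : ℕ | x ≤ y ∧ ∃ z : ℕ, 1 ≤ z ∧ y = T z - 1}

lemma T_mono : Monotone T := by
  apply monotone_nat_of_le_succ
  intro n
  cases n with
  | zero => simp [T]
  | succ m =>
    show 2 ^ T m ≤ 2 ^ T (m + 1)
    exact Nat.pow_le_pow_right (by norm_num)
      (by induction m with
        | zero => simp [T]
        | succ k ih =>
          show 2 ^ T k ≤ 2 ^ T (k+1)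
          exact Nat.pow_le_pow_right (by norm_num) ih)

lemma T_le_vN : ∀ n, T n ≤ vN n := by
  intro n
  induction n with
  | zero => simp [T, vN]
  | succ k ih =>
    calc T (k+1) = 2 ^ T k := rfl
    _ ≤ 2 ^ vN k := Nat.pow_le_pow_right (by norm_num) ih
    _ ≤ vN k + 2 ^ vN k := Nat.le_add_left _ _
    _ = vN (k+1) := rfl

lemma vN_succ_le : ∀ n, vN n + 1 ≤ T (n + 1) := by
  intro n
  induction n with
  | zero => simp [T, vN]
  | succ k ih =>
    have hTk : T (k + 1) = 2 ^ T k := rfl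
    have h1 : vN k ≤ 2 ^ T k - 1 := by omega
    have hT : 1 ≤ 2 ^ T k := Nat.one_le_two_pow
    have h2 : 2 ^ vN k ≤ 2 ^ (2 ^ T k - 1) :=
      Nat.pow_le_pow_right (by norm_num) h1
    have h3 : T k ≤ 2 ^ T k - 1 := by
      have := Nat.lt_two_pow_self (n := T k); omega
    have h4 : 2 ^ T k ≤ 2 ^ (2 ^ T k - 1) :=
      Nat.pow_le_pow_right (by norm_num) h3
    have h5 : 2 ^ (2 ^ T k - 1) + 2 ^ (2 ^ T k - 1) = 2 ^ (2 ^ T k) := by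
      have : 2 ^ (2 ^ T k - 1 + 1) = 2 ^ (2 ^ T k) := by
        congr 1; omega
      rw [pow_succ] at this; omega
    calc vN (k+1) + 1 = vN k + 1 + 2 ^ vN k := by simp [vN]; ring
    _ ≤ 2 ^ T k + 2 ^ (2 ^ T k - 1) := Nat.add_le_add ih h2
    _ ≤ 2 ^ (2 ^ T k - 1) + 2 ^ (2 ^ T k - 1) := Nat.add_le_add_right h4 _
    _ = 2 ^ (2 ^ T k) := h5
    _ = T (k + 2) := rfl

theorem VAck_vN : ∀ n : ℕ, VAck (vN n) = T (n + 1) - 1 := by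
  intro n
  have hmem : T (n + 1) - 1 ∈ {y : ℕ | vN n ≤ y ∧ ∃ z : ℕ, 1 ≤ z ∧ y = T z - 1} := by
    refine ⟨?_, n + 1, by omega, rfl⟩
    have := vN_succ_le n; omega
  apply le_antisymm
  · exact Nat.sInf_le hmem
  · apply le_csInf ⟨_, hmem⟩
    rintro y ⟨hle, z, hz, rfl⟩
    by_cases hzn : n + 1 ≤ z
    · have := T_mono hzn; omega
    · exfalso
      have hz_le : z ≤ n := by omega
      have h1 : T z ≤ T n := T_mono hz_le
      have h2 : T n ≤ vN n := T_le_vN n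
      have h3 : 1 ≤ T n := by
        calc 1 = T 1 := by simp [T]
        _ ≤ T n := T_mono (le_trans hz hz_le)
      omega
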